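/- With notation as above, let C be the coordinate subspace defined by the ideal I_C generated by {z_j : j ∈ J} for a subset J ⊆ {1,…,l}, let I = {1,…,k} with the components D_1,…,D_k of D containing C (so J ∩ {1,…,k} corresponds to those). Set J_2 = J ∖ {1,…,k}. Then the image under the residue map R_I of I_C Ω^p(log) ∩ W_k Ω^p(log) equals I_C Ω^{p-k}_{D_I} + dI_C ∧ Ω^{p-k-1}_{D_I}, where I_C Ω^{p-k}_{D_I} is the submodule generated by z_j ω (j ∈ J_2) and dI_C ∧ Ω^{p-k-1}_{D_I} by dz_j ∧ η (j ∈ J_2). -/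
import Mathlib


/-!
STATEMENT 5: local computation of the residue of `I_C Ω^p(log) ∩ W_k Ω^p(log)`:
for `C = {z_j = 0 : j ∈ J}`, `J ⊆ {1,…,l}`, `I = {1,…,k}` and `J₂ = J ∖ {1,…,k}`,
the image under `R_I` of `I_C Ω^p(log) ∩ W_k Ω^p(log)` equals
`I_C Ω^{p-k}_{D_I} + dI_C ∧ Ω^{p-k-1}_{D_I}`, the `O`-submodule (with coefficients
restricted to `D_I`) generated by `z_j · η` and `dz_j ∧ η` for `j ∈ J₂`.
-/


open MvPolynomial Finset

noncomputable section

/-- The local ring `O = ℂ[z_1,…,z_n]` (polynomial model of `ℂ[[z_1,…,z_n]]`). -/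
abbrev O (n : ℕ) := MvPolynomial (Fin n) ℂ

/-- A log differential form, written in the basis `ξ_B`, `B ⊆ {1,…,n}`:
the coefficient function `B ↦ f_B` of `ω = Σ_B f_B ξ_B`. -/
abbrev LogForm (n : ℕ) := Finset (Fin n) → O n

/-- `dz_i = c_i · ξ_i` with `c_i = z_i` for `i ≤ l` (logarithmic) and `c_i = 1` for `i > l`. -/
def lc (n l : ℕ) (i : Fin n) : O n := if (i : ℕ) < l then X i else 1

/-- Koszul sign for inserting `ξ_i` in front of `ξ_B`. -/
def sgn (n : ℕ) (i : Fin n) (B : Finset (Fin n)) : O n :=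
  (-1 : O n) ^ (B.filter (· < i)).card

/-- The exterior differential on log forms:
`d (f ξ_{B∖i}) = Σ_i ± c_i (∂f/∂z_i) ξ_B`. -/
def Dlog (n l : ℕ) (ω : LogForm n) : LogForm n :=
  fun B => ∑ i ∈ B, sgn n i (B.erase i) * lc n l i * pderiv i (ω (B.erase i))

/-- Forms of pure degree `p`. -/
def deg (n : ℕ) (p : ℕ) : Set (LogForm n) := { ω | ∀ B, B.card ≠ p → ω B = 0 }

/-- The logarithmic indices of `B`. -/
def logs (n l : ℕ) (B : Finset (Fin n)) : Finset (Fin n) :=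
  B.filter (fun i => (i : ℕ) < l)

/-- The squarefree monomial ideal `J(B,k)`: generated by `z_E`, `E ⊆ B ∩ {1,…,l}`,
such that `z_E ξ_B` has at most `k` uncancelled log poles. -/
def JBk (n l : ℕ) (k : ℤ) (B : Finset (Fin n)) : Ideal (O n) :=
  Ideal.span { m | ∃ E ⊆ logs n l B,
    ((logs n l B).card : ℤ) ≤ k + (E.card : ℤ) ∧ m = ∏ i ∈ E, X i }

/-- The weight filtration `W_k Ω^•(log) = ⊕_B J(B,k) ξ_B`. -/
def Wk (n l : ℕ) (k : ℤ) : Set (LogForm n) := { ω | ∀ B, ω B ∈ JBk n l k B }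

/-- Restriction to the coordinate subspace `{z_i = 0 : i ∈ I}`. -/
def resI (n : ℕ) (I : Finset (Fin n)) : O n →ₐ[ℂ] O n :=
  aeval (fun i => if i ∈ I then 0 else X i)

/-- Koszul sign for extracting `ξ_I` to the front of `ξ_{B ∪ I}`. -/
def sgnI (n : ℕ) (I B : Finset (Fin n)) : O n :=
  (-1 : O n) ^ (∑ i ∈ I, (B.filter (· < i)).card)

/-- The Poincaré residue `R_I` along `ξ_I = ∧_{i ∈ I} dz_i/z_i`. -/
def RI (n : ℕ) (I : Finset (Fin n)) (ω : LogForm n) : LogForm n :=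
  fun B => if B ∩ I = ∅ then sgnI n I B * resI n I (ω (B ∪ I)) else 0

/-- `I_k = {1,…,k}` (as indices `0,…,k-1` of `Fin n`). -/
def Ik (n k : ℕ) : Finset (Fin n) := Finset.univ.filter (fun i => (i : ℕ) < k)

/-- Honest (pole-free) forms on `D_I`, `I = I_k`, inside the basis encoding: supported on
`B` disjoint from `I_k`, coefficients independent of `z_1,…,z_k`, and for a remaining
logarithmic index `j ∈ B` the coefficient is divisible by `z_j` (so `z_j ξ_j = dz_j`). -/
def PlainDI (n l k : ℕ) : Set (LogForm n) :=
  { η | ∀ B, (¬ B ∩ Ik n k = ∅ → η B = 0) ∧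
      resI n (Ik n k) (η B) = η B ∧
      (∀ j ∈ B, k ≤ (j : ℕ) → (j : ℕ) < l → η B ∈ Ideal.span {(X j : O n)}) }

/-- Wedge with `dz_j = z_j ξ_j` (for a logarithmic index `j`). -/
def wdz (n : ℕ) (j : Fin n) (η : LogForm n) : LogForm n :=
  fun B => if j ∈ B then sgn n j (B.erase j) * X j * η (B.erase j) else 0


namespace Aux
variable {n : ℕ}

lemma resI_X (s : Finset (Fin n)) (i : Fin n) :
    resI n s (X i) = if i ∈ s then 0 else X i := aeval_X _ i

lemma resI_resI (s t : Finset (Fin n)) (f : O n) :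
    resI n s (resI n t f) = resI n (s ∪ t) f := by
  induction f using MvPolynomial.induction_on with
  | C a => simp [resI, aeval_C]
  | add p q hp hq => simp [map_add, hp, hq]
  | mul_X p i hp =>
    simp only [map_mul, hp, resI_X]
    by_cases hit : i ∈ t <;> by_cases his : i ∈ s <;>
      simp [hit, his, resI_X, Finset.mem_union]

lemma resI_idem (s : Finset (Fin n)) (f : O n) :
    resI n s (resI n s f) = resI n s f := by rw [resI_resI, Finset.union_self]

lemma resI_decomp (s : Finset (Fin n)) (f : O n) :
    ∃ c : Fin n → O n, f = resI n s f + ∑ j ∈ s, X j * c j := by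
  induction f using MvPolynomial.induction_on with
  | C a => exact ⟨0, by simp [resI, aeval_C]⟩
  | add p q hp hq =>
    obtain ⟨c, hc⟩ := hp; obtain ⟨d, hd⟩ := hq
    refine ⟨c + d, ?_⟩
    have hsum : ∑ j ∈ s, X j * (c + d) j
        = (∑ j ∈ s, X j * c j) + ∑ j ∈ s, X j * d j := by
      rw [← Finset.sum_add_distrib]
      exact Finset.sum_congr rfl fun j _ => by simp [mul_add]
    rw [map_add, hsum]
    calc p + q = (resI n s p + ∑ j ∈ s, X j * c j)
        + (resI n s q + ∑ j ∈ s, X j * d j) := by rw [← hc, ← hd]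
      _ = _ := by ring
  | mul_X p i hp =>
    obtain ⟨c, hc⟩ := hp
    by_cases his : i ∈ s
    · refine ⟨fun j => if j = i then p else 0, ?_⟩
      rw [map_mul, resI_X, if_pos his, mul_zero, zero_add]
      have h1 : ∑ j ∈ s, X j * (if j = i then p else 0)
          = ∑ j ∈ s, (if j = i then X j * p else 0) :=
        Finset.sum_congr rfl fun j _ => by rw [mul_ite, mul_zero]
      rw [h1, Finset.sum_ite_eq' s i (fun j => X j * p), if_pos his, mul_comm]
    · refine ⟨fun j => c j * X i, ?_⟩
      rw [map_mul, resI_X, if_neg his]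
      calc p * X i = (resI n s p + ∑ j ∈ s, X j * c j) * X i := by rw [← hc]
        _ = resI n s p * X i + ∑ j ∈ s, X j * (c j * X i) := by
          rw [add_mul, Finset.sum_mul]
          congr 1
          exact Finset.sum_congr rfl fun j _ => by ring

lemma X_dvd_of (i : Fin n) (f : O n) (h : resI n {i} f = 0) : X i ∣ f := by
  obtain ⟨c, hc⟩ := resI_decomp {i} f
  rw [h, zero_add, Finset.sum_singleton] at hc
  exact ⟨c i, hc⟩

lemma resI_eq_zero_of_dvd (i : Fin n) (f : O n) (h : X i ∣ f) :
    resI n {i} f = 0 := by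
  obtain ⟨g, rfl⟩ := h
  rw [map_mul, resI_X, if_pos (Finset.mem_singleton_self i), zero_mul]

lemma prod_X_dvd (E : Finset (Fin n)) (f : O n) (h : ∀ i ∈ E, X i ∣ f) :
    (∏ i ∈ E, X i) ∣ f := by
  induction E using Finset.induction_on generalizing f with
  | empty => simp
  | @insert a E ha ih =>
    obtain ⟨g, hg⟩ := h a (Finset.mem_insert_self a E)
    rw [Finset.prod_insert ha, hg]
    refine mul_dvd_mul_left _ (ih g fun i hi => ?_)
    have hia : a ≠ i := fun e => ha (e ▸ hi)
    have h0 : resI n {i} (X a * g) = 0 :=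
      resI_eq_zero_of_dvd i _ (hg ▸ h i (Finset.mem_insert_of_mem hi))
    rw [map_mul, resI_X, if_neg (by simp [hia])] at h0
    exact X_dvd_of i g ((mul_eq_zero.mp h0).resolve_left (X_ne_zero a))

lemma span_apply (φ : O n →ₐ[ℂ] O n) (S : Set (O n)) (T : Ideal (O n))
    (h : ∀ x ∈ S, φ x ∈ T) {f : O n} (hf : f ∈ Ideal.span S) : φ f ∈ T := by
  refine Submodule.span_induction (p := fun x _ => φ x ∈ T) h ?_ ?_ ?_ hf
  · show φ 0 ∈ T
    rw [map_zero]; exact T.zero_mem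
  · intro x y _ _ hx hy; show φ (x + y) ∈ T
    rw [map_add]; exact T.add_mem hx hy
  · intro a x _ hx; show φ (a • x) ∈ T
    rw [smul_eq_mul, map_mul]; exact T.mul_mem_left _ hx

lemma neg_one_pow_mul_self (e : ℕ) : ((-1 : O n) ^ e) * ((-1 : O n) ^ e) = 1 := by
  rw [← pow_add, ← two_mul, pow_mul]; norm_num

lemma mem_Ik {k : ℕ} {i : Fin n} : i ∈ Ik n k ↔ (i : ℕ) < k := by simp [Ik]

lemma card_Ik {k : ℕ} (hkn : k ≤ n) : (Ik n k).card = k := by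
  induction k with
  | zero => simp [Ik]
  | succ k ih =>
    have hk : k < n := hkn
    have hins : Ik n (k + 1) = insert ⟨k, hk⟩ (Ik n k) := by
      ext i
      simp only [mem_Ik, Finset.mem_insert, Fin.ext_iff]
      omega
    rw [hins, Finset.card_insert_of_notMem (by simp [mem_Ik]), ih (le_of_lt hk)]

lemma resI_sgnI (s t B : Finset (Fin n)) : resI n s (sgnI n t B) = sgnI n t B := by
  unfold sgnI; rw [map_pow, map_neg, map_one]

lemma resI_sgn (s : Finset (Fin n)) (i : Fin n) (B : Finset (Fin n)) :
    resI n s (sgn n i B) = sgn n i B := by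
  unfold sgn; rw [map_pow, map_neg, map_one]

lemma sgnI_mul_self (t B : Finset (Fin n)) : sgnI n t B * sgnI n t B = 1 :=
  neg_one_pow_mul_self _

lemma sgn_mul_self (i : Fin n) (B : Finset (Fin n)) : sgn n i B * sgn n i B = 1 :=
  neg_one_pow_mul_self _

end Aux

/-- contraction of the `ξ_I`-shifted form. -/
def Om (n k : ℕ) (η : LogForm n) : LogForm n :=
  fun B => if Ik n k ⊆ B then sgnI n (Ik n k) (B \ Ik n k) * η (B \ Ik n k) else 0

/-- single-component form. -/
def sf (n : ℕ) (B : Finset (Fin n)) (f : O n) : LogForm n :=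
  fun B' => if B' = B then f else 0

theorem cup_products_stmt5 (n l k p : ℕ) (hkl : k ≤ l) (hln : l ≤ n) (hkp : k ≤ p)
    (J : Finset (Fin n)) (hJ : ∀ j ∈ J, (j : ℕ) < l) :
    ∀ η : LogForm n, η ∈ deg n (p - k) →
      ((η ∈ Submodule.span (O n)
          ({ x | ∃ j ∈ J, k ≤ (j : ℕ) ∧
              ∃ η' ∈ PlainDI n l k ∩ deg n (p - k), x = (X j : O n) • η' } ∪
           { x | ∃ j ∈ J, k ≤ (j : ℕ) ∧
              ∃ η' ∈ PlainDI n l k ∩ deg n (p - k - 1), x = wdz n j η' }) ∧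
        ∀ B, resI n (Ik n k) (η B) = η B)
      ↔ ∃ ω : LogForm n,
          (∀ B, ω B ∈ Ideal.span ((fun j => (X j : O n)) '' (J : Set (Fin n)))) ∧
          ω ∈ Wk n l (k : ℤ) ∧ ω ∈ deg n p ∧ RI n (Ik n k) ω = η) := by
  have hkn : k ≤ n := le_trans hkl hln
  -- membership helper for `JBk`
  have hJBk : ∀ (B : Finset (Fin n)) (v : O n), Ik n k ⊆ B →
      (∀ i ∈ logs n l B \ Ik n k, X i ∣ v) → v ∈ JBk n l k B := by
    intro B v hIB hdvd
    have hIlog : Ik n k ⊆ logs n l B := fun i hi =>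
      Finset.mem_filter.mpr ⟨hIB hi, lt_of_lt_of_le (Aux.mem_Ik.mp hi) hkl⟩
    have hcard := Finset.card_sdiff_add_card_eq_card hIlog
    rw [Aux.card_Ik hkn] at hcard
    have hmgen : (∏ i ∈ logs n l B \ Ik n k, X i : O n) ∈ JBk n l k B := by
      apply Ideal.subset_span
      refine ⟨logs n l B \ Ik n k, Finset.sdiff_subset, ?_, rfl⟩
      push_cast
      omega
    obtain ⟨c, hc⟩ := Aux.prod_X_dvd _ v hdvd
    rw [hc]
    exact Ideal.mul_mem_right _ _ hmgen
  intro η hdeg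
  constructor
  · -- forward direction
    rintro ⟨hspan, hres⟩
    have key : (∀ B, Om n k η B ∈
          Ideal.span ((fun j => (X j : O n)) '' (J : Set (Fin n)))) ∧
        (∀ B, Om n k η B ∈ JBk n l (k : ℤ) B) ∧
        (∀ B, ¬ B ∩ Ik n k = ∅ → η B = 0) := by
      refine Submodule.span_induction (p := fun x _ =>
        (∀ B, Om n k x B ∈
          Ideal.span ((fun j => (X j : O n)) '' (J : Set (Fin n)))) ∧
        (∀ B, Om n k x B ∈ JBk n l (k : ℤ) B) ∧
        (∀ B, ¬ B ∩ Ik n k = ∅ → x B = 0)) ?_ ?_ ?_ ?_ hspan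
      · -- generators
        rintro x (⟨j, hjJ, hjk, η', ⟨hplain, hdeg'⟩, rfl⟩ |
                  ⟨j, hjJ, hjk, η', ⟨hplain, hdeg'⟩, rfl⟩)
        · -- x = X j • η'
          have hXj : (X j : O n) ∈
              Ideal.span ((fun j => (X j : O n)) '' (J : Set (Fin n))) :=
            Ideal.subset_span ⟨j, hjJ, rfl⟩
          refine ⟨fun B => ?_, fun B => ?_, fun B hB => ?_⟩
          · unfold Om; split_ifs with hIB
            · simp only [Pi.smul_apply, smul_eq_mul]
              exact Ideal.mul_mem_left _ _ (Ideal.mul_mem_right _ _ hXj)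
            · exact Submodule.zero_mem _
          · unfold Om; split_ifs with hIB
            · apply hJBk B _ hIB
              intro i hi
              obtain ⟨hiF, hiIk⟩ := Finset.mem_sdiff.mp hi
              obtain ⟨hiB, hil⟩ := Finset.mem_filter.mp hiF
              have hik : k ≤ (i : ℕ) := le_of_not_gt fun hlt => hiIk (Aux.mem_Ik.mpr hlt)
              have hmem : i ∈ B \ Ik n k := Finset.mem_sdiff.mpr ⟨hiB, hiIk⟩
              have hdv : X i ∣ η' (B \ Ik n k) :=
                Ideal.mem_span_singleton.mp ((hplain (B \ Ik n k)).2.2 i hmem hik hil)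
              simp only [Pi.smul_apply, smul_eq_mul]
              exact (hdv.mul_left _).mul_left _
            · exact Submodule.zero_mem _
          · simp only [Pi.smul_apply, smul_eq_mul, (hplain B).1 hB, mul_zero]
        · -- x = wdz n j η'
          refine ⟨fun B => ?_, fun B => ?_, fun B hB => ?_⟩
          · unfold Om; split_ifs with hIB
            · unfold wdz; split_ifs with hjB
              · have heq : sgnI n (Ik n k) (B \ Ik n k) *
                    (sgn n j ((B \ Ik n k).erase j) * X j * η' ((B \ Ik n k).erase j))
                    = (sgnI n (Ik n k) (B \ Ik n k) * sgn n j ((B \ Ik n k).erase j) *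
                      η' ((B \ Ik n k).erase j)) * X j := by ring
                rw [heq]
                exact Ideal.mul_mem_left _ _ (Ideal.subset_span ⟨j, hjJ, rfl⟩)
              · rw [mul_zero]; exact Submodule.zero_mem _
            · exact Submodule.zero_mem _
          · unfold Om; split_ifs with hIB
            · unfold wdz; split_ifs with hjB
              · apply hJBk B _ hIB
                intro i hi
                obtain ⟨hiF, hiIk⟩ := Finset.mem_sdiff.mp hi
                obtain ⟨hiB, hil⟩ := Finset.mem_filter.mp hiF
                have hik : k ≤ (i : ℕ) := le_of_not_gt fun hlt => hiIk (Aux.mem_Ik.mpr hlt)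
                by_cases hij : i = j
                · subst hij
                  exact ⟨sgnI n (Ik n k) (B \ Ik n k) * sgn n i ((B \ Ik n k).erase i) *
                    η' ((B \ Ik n k).erase i), by ring⟩
                · have hmem : i ∈ (B \ Ik n k).erase j :=
                    Finset.mem_erase.mpr ⟨hij, Finset.mem_sdiff.mpr ⟨hiB, hiIk⟩⟩
                  have hdv : X i ∣ η' ((B \ Ik n k).erase j) :=
                    Ideal.mem_span_singleton.mp ((hplain _).2.2 i hmem hik hil)
                  exact (hdv.mul_left _).mul_left _
              · rw [mul_zero]; exact Submodule.zero_mem _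
            · exact Submodule.zero_mem _
          · unfold wdz; split_ifs with hjB
            · have hne : ¬ B.erase j ∩ Ik n k = ∅ := by
                obtain ⟨i, hi⟩ := Finset.nonempty_iff_ne_empty.mpr hB
                have hiB := (Finset.mem_inter.mp hi).1
                have hiIk := (Finset.mem_inter.mp hi).2
                have hij : i ≠ j := by
                  intro e; subst e
                  exact absurd (Aux.mem_Ik.mp hiIk) (not_lt.mpr hjk)
                intro hempty
                exact (Finset.eq_empty_iff_forall_notMem.mp hempty i)
                  (Finset.mem_inter.mpr ⟨Finset.mem_erase.mpr ⟨hij, hiB⟩, hiIk⟩)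
              rw [(hplain (B.erase j)).1 hne, mul_zero]
            · rfl
      · -- zero
        refine ⟨fun B => ?_, fun B => ?_, fun B _ => rfl⟩
        · unfold Om; split_ifs
          · rw [show (0 : LogForm n) (B \ Ik n k) = 0 from rfl, mul_zero]
            exact Submodule.zero_mem _
          · exact Submodule.zero_mem _
        · unfold Om; split_ifs
          · rw [show (0 : LogForm n) (B \ Ik n k) = 0 from rfl, mul_zero]
            exact Submodule.zero_mem _
          · exact Submodule.zero_mem _
      · -- add
        rintro x y - - ⟨hx1, hx2, hx3⟩ ⟨hy1, hy2, hy3⟩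
        have hOm : ∀ B, Om n k (x + y) B = Om n k x B + Om n k y B := by
          intro B; unfold Om; split_ifs
          · rw [show (x + y) (B \ Ik n k) = x (B \ Ik n k) + y (B \ Ik n k) from rfl,
              mul_add]
          · exact (add_zero 0).symm
        refine ⟨fun B => ?_, fun B => ?_, fun B hB => ?_⟩
        · rw [hOm B]; exact Submodule.add_mem _ (hx1 B) (hy1 B)
        · rw [hOm B]; exact Submodule.add_mem _ (hx2 B) (hy2 B)
        · show x B + y B = 0
          rw [hx3 B hB, hy3 B hB, add_zero]
      · -- smul
        rintro a x - ⟨hx1, hx2, hx3⟩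
        have hOm : ∀ B, Om n k (a • x) B = a * Om n k x B := by
          intro B; unfold Om; split_ifs
          · rw [show (a • x) (B \ Ik n k) = a * x (B \ Ik n k) from rfl]
            ring
          · rw [mul_zero]
        refine ⟨fun B => ?_, fun B => ?_, fun B hB => ?_⟩
        · rw [hOm B]; exact Ideal.mul_mem_left _ _ (hx1 B)
        · rw [hOm B]; exact Ideal.mul_mem_left _ _ (hx2 B)
        · show a * x B = 0
          rw [hx3 B hB, mul_zero]
    refine ⟨Om n k η, key.1, key.2.1, ?_, ?_⟩
    · -- degree p
      intro B hB
      unfold Om; split_ifs with hIB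
      · have hcard := Finset.card_sdiff_add_card_eq_card hIB
        rw [Aux.card_Ik hkn] at hcard
        have hne : (B \ Ik n k).card ≠ p - k := fun he => hB (by omega)
        rw [hdeg _ hne, mul_zero]
      · rfl
    · -- RI (Om η) = η
      funext B
      unfold RI; split_ifs with hB
      · have hdisj : Disjoint B (Ik n k) := Finset.disjoint_iff_inter_eq_empty.mpr hB
        have hsd : (B ∪ Ik n k) \ Ik n k = B := Finset.union_sdiff_cancel_right hdisj
        unfold Om
        rw [if_pos Finset.subset_union_right, hsd, map_mul, Aux.resI_sgnI, hres B,
          ← mul_assoc, Aux.sgnI_mul_self, one_mul]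
      · exact (key.2.2 B hB).symm
  · -- backward direction
    rintro ⟨ω, hIC, hW, hdegw, rfl⟩
    constructor
    · -- span membership
      have hdecomp : RI n (Ik n k) ω
          = ∑ B ∈ (Finset.univ : Finset (Finset (Fin n))), sf n B (RI n (Ik n k) ω B) := by
        funext B'
        rw [Finset.sum_apply]
        simp [sf, Finset.sum_ite_eq]
      rw [hdecomp]
      apply Submodule.sum_mem
      intro B _
      by_cases h0 : RI n (Ik n k) ω B = 0
      · rw [h0]
        have hz : sf n B (0 : O n) = (0 : LogForm n) := by funext B'; simp [sf]
        rw [hz]; exact Submodule.zero_mem _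
      have hB : B ∩ Ik n k = ∅ := by
        by_contra hB
        exact h0 (by unfold RI; rw [if_neg hB])
      have hgval : RI n (Ik n k) ω B
          = sgnI n (Ik n k) B * resI n (Ik n k) (ω (B ∪ Ik n k)) := by
        unfold RI; rw [if_pos hB]
      set F := logs n l B with hFdef
      have hBk : ∀ i ∈ B, k ≤ (i : ℕ) := by
        intro i hi
        by_contra hlt
        push_neg at hlt
        exact (Finset.eq_empty_iff_forall_notMem.mp hB i)
          (Finset.mem_inter.mpr ⟨hi, Aux.mem_Ik.mpr hlt⟩)
      have hcardB : B.card = p - k := by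
        by_contra hcB
        exact h0 (hdeg B hcB)
      have hresg : resI n (Ik n k) (RI n (Ik n k) ω B) = RI n (Ik n k) ω B := by
        rw [hgval, map_mul, Aux.resI_sgnI, Aux.resI_idem]
      have hFsub : ∀ i ∈ F, i ∈ B := fun i hi => (Finset.mem_filter.mp hi).1
      have hFl : ∀ i ∈ F, (i : ℕ) < l := fun i hi => (Finset.mem_filter.mp hi).2
      have hFIk : ∀ i ∈ F, i ∉ Ik n k := by
        intro i hi hik
        exact absurd (Aux.mem_Ik.mp hik) (not_lt.mpr (hBk i (hFsub i hi)))
      -- divisibility by the full product of remaining log variables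
      have hmdvd : (∏ i ∈ F, X i : O n) ∣ RI n (Ik n k) ω B := by
        have hmem : resI n (Ik n k) (ω (B ∪ Ik n k)) ∈
            Ideal.span {(∏ i ∈ F, X i : O n)} := by
          refine Aux.span_apply _ _ _ ?_ (hW (B ∪ Ik n k))
          rintro x ⟨E, hE, hcard, rfl⟩
          rw [map_prod]
          by_cases hEI : ∃ i ∈ E, i ∈ Ik n k
          · obtain ⟨i, hiE, hiI⟩ := hEI
            rw [Finset.prod_eq_zero hiE (by rw [Aux.resI_X, if_pos hiI])]
            exact Submodule.zero_mem _
          · push_neg at hEI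
            have hEq : (∏ i ∈ E, resI n (Ik n k) (X i)) = ∏ i ∈ E, X i :=
              Finset.prod_congr rfl fun i hi => by rw [Aux.resI_X, if_neg (hEI i hi)]
            rw [hEq]
            have hlogsU : logs n l (B ∪ Ik n k) = F ∪ Ik n k := by
              ext i
              simp only [hFdef, logs, Finset.mem_filter, Finset.mem_union, Aux.mem_Ik]
              by_cases hiB : i ∈ B <;> simp [hiB] <;> omega
            have hEF : E ⊆ F := by
              intro i hi
              rcases Finset.mem_union.mp (hlogsU ▸ hE hi) with hx | hx
              · exact hx
              · exact absurd hx (hEI i hi)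
            have hdisjF : Disjoint F (Ik n k) := Finset.disjoint_left.mpr hFIk
            have hcards : (logs n l (B ∪ Ik n k)).card = F.card + k := by
              rw [hlogsU, Finset.card_union_of_disjoint hdisjF, Aux.card_Ik hkn]
            have hEcard : F.card ≤ E.card := by
              rw [hcards] at hcard
              push_cast at hcard
              omega
            rw [show E = F from Finset.eq_of_subset_of_card_le hEF hEcard]
            exact Ideal.subset_span rfl
        refine Ideal.mem_span_singleton.mp ?_
        rw [hgval]
        exact Ideal.mul_mem_left _ _ hmem
      -- vanishing of the coefficient under killing the variables of J₂
      have hkill : resI n (J.filter (fun j0 : Fin n => k ≤ (j0 : ℕ))) (RI n (Ik n k) ω B) = 0 := by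
        rw [hgval, map_mul, Aux.resI_sgnI, Aux.resI_resI]
        have hz : resI n (J.filter (fun j0 : Fin n => k ≤ (j0 : ℕ)) ∪ Ik n k) (ω (B ∪ Ik n k))
            ∈ (⊥ : Ideal (O n)) := by
          refine Aux.span_apply _ _ _ ?_ (hIC (B ∪ Ik n k))
          rintro x ⟨j, hj, rfl⟩
          have hjJ : j ∈ J := hj
          have hjmem : j ∈ J.filter (fun j0 : Fin n => k ≤ (j0 : ℕ)) ∪ Ik n k := by
            rcases lt_or_ge (j : ℕ) k with hx | hx
            · exact Finset.mem_union_right _ (Aux.mem_Ik.mpr hx)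
            · exact Finset.mem_union_left _ (Finset.mem_filter.mpr ⟨hjJ, hx⟩)
          rw [Ideal.mem_bot, Aux.resI_X, if_pos hjmem]
        rw [Ideal.mem_bot.mp hz, mul_zero]
      by_cases hcase : ∃ j ∈ F, j ∈ J
      · -- Case 1: some component of C appears among the remaining log indices of B.
        obtain ⟨j, hjF, hjJ⟩ := hcase
        have hjB : j ∈ B := hFsub j hjF
        have hjl : (j : ℕ) < l := hFl j hjF
        have hjk : k ≤ (j : ℕ) := hBk j hjB
        have hjIk : j ∉ Ik n k := fun hx => absurd (Aux.mem_Ik.mp hx) (not_lt.mpr hjk)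
        obtain ⟨h, hh⟩ := hmdvd
        have hgb : RI n (Ik n k) ω B = X j * ((∏ i ∈ F.erase j, X i) * h) := by
          rw [hh, ← Finset.mul_prod_erase F X hjF, mul_assoc]
        have hresb : resI n (Ik n k) ((∏ i ∈ F.erase j, X i) * h)
            = (∏ i ∈ F.erase j, X i) * h := by
          have hXjfix : resI n (Ik n k) (X j) = X j := by rw [Aux.resI_X, if_neg hjIk]
          have h2 := hresg
          rw [hgb, map_mul, hXjfix] at h2
          exact mul_left_cancel₀ (X_ne_zero j) h2
        have hplain' : sf n (B.erase j)
            (sgn n j (B.erase j) * ((∏ i ∈ F.erase j, X i) * h)) ∈ PlainDI n l k := by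
          intro B'
          refine ⟨?_, ?_, ?_⟩
          · intro hne
            unfold sf; split_ifs with he
            · exfalso
              apply hne
              rw [he]
              apply Finset.eq_empty_iff_forall_notMem.mpr
              intro i hi
              obtain ⟨hie, hiI⟩ := Finset.mem_inter.mp hi
              exact Finset.eq_empty_iff_forall_notMem.mp hB i
                (Finset.mem_inter.mpr ⟨Finset.mem_of_mem_erase hie, hiI⟩)
            · rfl
          · unfold sf; split_ifs with he
            · rw [map_mul, Aux.resI_sgn, hresb]
            · exact map_zero _
          · intro j' hj' hk' hl'
            unfold sf; split_ifs with he
            · subst he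
              have hj'B : j' ∈ B := Finset.mem_of_mem_erase hj'
              have hj'F : j' ∈ F.erase j := Finset.mem_erase.mpr
                ⟨(Finset.mem_erase.mp hj').1, Finset.mem_filter.mpr ⟨hj'B, hl'⟩⟩
              refine Ideal.mem_span_singleton.mpr ?_
              have hd : X j' ∣ (∏ i ∈ F.erase j, X i) * h :=
                dvd_mul_of_dvd_left (Finset.dvd_prod_of_mem X hj'F) h
              exact hd.mul_left _
            · exact Submodule.zero_mem _
        have hdeg' : sf n (B.erase j)
            (sgn n j (B.erase j) * ((∏ i ∈ F.erase j, X i) * h)) ∈ deg n (p - k - 1) := by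
          intro B' hcard'
          unfold sf; split_ifs with he
          · exfalso
            apply hcard'
            rw [he, Finset.card_erase_of_mem hjB, hcardB]
          · rfl
        have hwdz : wdz n j (sf n (B.erase j)
              (sgn n j (B.erase j) * ((∏ i ∈ F.erase j, X i) * h)))
            = sf n B (RI n (Ik n k) ω B) := by
          funext B'
          unfold wdz sf
          by_cases hjB' : j ∈ B'
          · rw [if_pos hjB']
            by_cases hBB : B' = B
            · subst hBB
              rw [if_pos rfl, if_pos rfl]
              calc sgn n j (B'.erase j) * X j *
                    (sgn n j (B'.erase j) * ((∏ i ∈ F.erase j, X i) * h))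
                  = (sgn n j (B'.erase j) * sgn n j (B'.erase j)) *
                    (X j * ((∏ i ∈ F.erase j, X i) * h)) := by ring
                _ = RI n (Ik n k) ω B' := by rw [Aux.sgn_mul_self, one_mul, ← hgb]
            · have hne2 : ¬ B'.erase j = B.erase j := by
                intro he
                exact hBB (by rw [← Finset.insert_erase hjB', he, Finset.insert_erase hjB])
              rw [if_neg hne2, if_neg hBB, mul_zero]
          · rw [if_neg hjB']
            have hBB : ¬ B' = B := fun he => hjB' (he ▸ hjB)
            rw [if_neg hBB]
        rw [← hwdz]
        exact Submodule.subset_span (Or.inr ⟨j, hjJ, hjk, _, ⟨hplain', hdeg'⟩, rfl⟩)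
      · -- Case 2: no component of C among the remaining log indices of B.
        push_neg at hcase
        obtain ⟨h, hh⟩ := hmdvd
        have hmJ₂ : resI n (J.filter (fun j0 : Fin n => k ≤ (j0 : ℕ))) (∏ i ∈ F, X i)
            = ∏ i ∈ F, X i := by
          rw [map_prod]
          refine Finset.prod_congr rfl fun i hi => ?_
          rw [Aux.resI_X, if_neg]
          intro hiJ₂
          exact hcase i hi (Finset.mem_filter.mp hiJ₂).1
        have hmne : (∏ i ∈ F, X i : O n) ≠ 0 :=
          Finset.prod_ne_zero_iff.mpr fun i _ => X_ne_zero i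
        have hkh : resI n (J.filter (fun j0 : Fin n => k ≤ (j0 : ℕ))) h = 0 := by
          have h2 := hkill
          rw [hh, map_mul, hmJ₂] at h2
          exact (mul_eq_zero.mp h2).resolve_left hmne
        obtain ⟨c, hcdec⟩ := Aux.resI_decomp (J.filter (fun j0 : Fin n => k ≤ (j0 : ℕ))) h
        rw [hkh, zero_add] at hcdec
        have hresm : resI n (Ik n k) (∏ i ∈ F, X i) = ∏ i ∈ F, X i := by
          rw [map_prod]
          exact Finset.prod_congr rfl fun i hi => by rw [Aux.resI_X, if_neg (hFIk i hi)]
        have hga : RI n (Ik n k) ω B = ∑ j ∈ J.filter (fun j0 : Fin n => k ≤ (j0 : ℕ)),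
            X j * resI n (Ik n k) ((∏ i ∈ F, X i) * c j) := by
          conv_lhs => rw [← hresg, hh, hcdec]
          rw [Finset.mul_sum, map_sum]
          refine Finset.sum_congr rfl fun j hj => ?_
          have hjk : k ≤ (j : ℕ) := (Finset.mem_filter.mp hj).2
          have hre : (∏ i ∈ F, X i) * (X j * c j) = X j * ((∏ i ∈ F, X i) * c j) := by
            ring
          rw [hre, map_mul, Aux.resI_X,
            if_neg (fun hji => absurd (Aux.mem_Ik.mp hji) (not_lt.mpr hjk))]
        have hsplit : sf n B (RI n (Ik n k) ω B)
            = ∑ j ∈ J.filter (fun j0 : Fin n => k ≤ (j0 : ℕ)),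
              (X j : O n) • sf n B (resI n (Ik n k) ((∏ i ∈ F, X i) * c j)) := by
          funext B'
          rw [Finset.sum_apply]
          by_cases hBB : B' = B
          · subst hBB
            simp only [sf, if_pos rfl, Pi.smul_apply, smul_eq_mul]
            exact hga
          · simp only [sf, if_neg hBB, Pi.smul_apply, smul_eq_mul, mul_zero]
            exact (Finset.sum_const_zero).symm
        rw [hsplit]
        apply Submodule.sum_mem
        intro j hj
        have hjJ : j ∈ J := (Finset.mem_filter.mp hj).1
        have hjk : k ≤ (j : ℕ) := (Finset.mem_filter.mp hj).2
        apply Submodule.subset_span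
        left
        refine ⟨j, hjJ, hjk, _, ⟨?_, ?_⟩, rfl⟩
        · intro B'
          refine ⟨?_, ?_, ?_⟩
          · intro hne; unfold sf; split_ifs with he
            · exact absurd (by rw [he]; exact hB) hne
            · rfl
          · unfold sf; split_ifs with he
            · exact Aux.resI_idem _ _
            · exact map_zero _
          · intro j' hj' hk' hl'
            unfold sf; split_ifs with he
            · subst he
              refine Ideal.mem_span_singleton.mpr ?_
              rw [map_mul, hresm]
              exact dvd_mul_of_dvd_left
                (Finset.dvd_prod_of_mem X (Finset.mem_filter.mpr ⟨hj', hl'⟩)) _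
            · exact Submodule.zero_mem _
        · intro B' hcard'
          unfold sf; split_ifs with he
          · exfalso; exact hcard' (by rw [he, hcardB])
          · rfl
    · -- restriction-fixed coefficients
      intro B
      unfold RI; split_ifs with hB
      · rw [map_mul, Aux.resI_sgnI, Aux.resI_idem]
      · exact map_zero _

end
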